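/- In the integrality-gap instance, the fractional LP solution setting x_j = 2^{−p} for all j ∈ C', z_i = 2^{−ℓ} for each voter i ∈ V_ℓ, and y_{ij} = min(x_j, z_i), is feasible for the LP relaxation and has objective value at most 1/p; hence θ_p ≤ 1/p while θ_c ≥ 1/2, giving an Ω(log m) integrality gap. -/

import Mathlib

attribute [local instance] Classical.propDecidable

/-- Voters of the integrality-gap instance: group `V_ℓ` (for `ℓ : Fin p`, representing
the paper's group `ℓ+1`) contains `2^(ℓ+1)` voters. -/
abbrev GapVoter (p : ℕ) := Σ ℓ : Fin p, Fin (2 ^ (ℓ.1 + 1))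

/-- Candidates: group `C_q` of `2^(q+1) - 1` candidates approved only by `V_q`,
a group `C'` of `2^p` candidates approved by all voters, and `p` dummy candidates. -/
abbrev GapCand (p : ℕ) := (Σ q : Fin p, Fin (2 ^ (q.1 + 1) - 1)) ⊕ (Fin (2 ^ p) ⊕ Fin p)

/-- Approval sets of the integrality-gap instance. -/
noncomputable def gapA (p : ℕ) (v : GapVoter p) : Finset (GapCand p) :=
  Finset.univ.filter (fun c => match c with
    | Sum.inl ⟨q, _⟩ => q = v.1
    | Sum.inr (Sum.inl _) => True
    | Sum.inr (Sum.inr _) => False)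

/-- The committee `W = (∪_q C_q) ∪ dummies` of the integrality-gap instance. -/
noncomputable def gapW (p : ℕ) : Finset (GapCand p) :=
  Finset.univ.filter (fun c => match c with
    | Sum.inr (Sum.inl _) => False
    | _ => True)

/-- LP solution: `x_j = 2^{-p}` on `C'` and `0` elsewhere. -/
noncomputable def gapx (p : ℕ) : GapCand p → ℝ := fun c => match c with
  | Sum.inr (Sum.inl _) => 1 / 2 ^ p
  | _ => 0

/-- LP solution: `z_i = 2^{-ℓ}` for a voter of the group with `2^ℓ` voters. -/
noncomputable def gapz (p : ℕ) : GapVoter p → ℝ := fun v => 1 / 2 ^ (v.1.1 + 1)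

/-! Every voter approves all of `C'`, where `x_j = 2^{-p}` is below every `z_i`, so
`y_{ij} = x_j` and each covering constraint holds with equality, both sides being `1`. Each group
carries total `z`-mass `1` and `C'` total `x`-mass `1`, so the objective is `1 / p`.

For the integral side, let `V_ℓ` be the highest group met by a voter set `S`. Then
`|S| ≤ 2 + 4 + ⋯ + 2^ℓ < 2^{ℓ+1}`, while a committee `T` that gives a voter of `V_ℓ` more approved
candidates than `|W ∩ A_i| = 2^ℓ - 1` has at least `2^ℓ` members; hence `|T| / |S| ≥ 1/2`. -/

lemma gapx_le_gapz {p : ℕ} (j : GapCand p) (v : GapVoter p) : gapx p j ≤ gapz p v := by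
  rcases j with _ | _ | _ <;> simp only [gapx, gapz]
  · positivity
  · exact one_div_pow_le_one_div_pow_of_le one_le_two v.1.2
  · positivity

lemma gapx_nonneg {p : ℕ} (j : GapCand p) : 0 ≤ gapx p j := by
  rcases j with _ | _ | _ <;> simp only [gapx] <;> positivity

lemma gapz_nonneg {p : ℕ} (v : GapVoter p) : 0 ≤ gapz p v := by
  simp only [gapz]; positivity

lemma sum_gapx (p : ℕ) : ∑ j : GapCand p, gapx p j = 1 := by
  simp [Fintype.sum_sum_type, gapx]

lemma sum_gapz (p : ℕ) : ∑ v : GapVoter p, gapz p v = p := by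
  simp [← Finset.univ_sigma_univ, Finset.sum_sigma, gapz]

lemma gapx_eq_zero_of_notMem_gapA {p : ℕ} {v : GapVoter p} {j : GapCand p} (hj : j ∉ gapA p v) :
    gapx p j = 0 := by
  rcases j with _ | _ | _ <;> simp_all [gapA, gapx]

lemma sum_min_gapx_gapz {p : ℕ} (v : GapVoter p) :
    ∑ j ∈ gapA p v, min (gapx p j) (gapz p v) = 1 := by
  simp only [min_eq_left (gapx_le_gapz _ v)]
  rw [Finset.sum_subset (Finset.subset_univ _) fun j _ hj => gapx_eq_zero_of_notMem_gapA hj,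
    sum_gapx]

lemma gapW_inter_gapA {p : ℕ} (v : GapVoter p) :
    gapW p ∩ gapA p v =
      Finset.univ.map ((Function.Embedding.sigmaMk v.1).trans .inl) := by
  ext ((⟨q, j⟩ | _ | _))
  · simp only [gapW, gapA, Finset.mem_inter, Finset.mem_filter, Finset.mem_univ, true_and,
      Finset.mem_map, Function.Embedding.trans_apply, Function.Embedding.sigmaMk_apply,
      Function.Embedding.inl_apply, Sum.inl.injEq]
    constructor
    · rintro rfl; exact ⟨j, rfl⟩
    · rintro ⟨_, h⟩; cases h; rfl
  all_goals simp [gapW, gapA]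

lemma card_gapW_inter_gapA {p : ℕ} (v : GapVoter p) :
    (gapW p ∩ gapA p v).card = 2 ^ (v.1.1 + 1) - 1 := by
  simp [gapW_inter_gapA]

lemma gapz_mul_card_gapW_inter_gapA_add_one {p : ℕ} (v : GapVoter p) :
    gapz p v * (((gapW p ∩ gapA p v).card : ℝ) + 1) = 1 := by
  rw [card_gapW_inter_gapA, Nat.cast_sub Nat.one_le_two_pow]
  simp [gapz]

lemma sum_range_two_pow_succ_add_two (n : ℕ) :
    ∑ k ∈ Finset.range n, 2 ^ (k + 1) + 2 = 2 ^ (n + 1) := by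
  induction n with
  | zero => rfl
  | succ n ih => rw [Finset.sum_range_succ, add_right_comm, ih, pow_succ 2 (n + 1)]; ring

lemma card_add_two_le_of_forall_fst_le {p : ℕ} (S : Finset (GapVoter p)) (m : Fin p)
    (hS : ∀ v ∈ S, v.1 ≤ m) : S.card + 2 ≤ 2 ^ (m.1 + 2) := by
  have hcard : S.card ≤ ∑ k ∈ Finset.range (m.1 + 1), 2 ^ (k + 1) :=
    calc S.card ≤ ((Finset.Iic m).sigma fun _ => Finset.univ).card :=
          Finset.card_le_card fun v hv => by simpa using hS v hv
      _ = ∑ k ∈ Finset.range (m.1 + 1), 2 ^ (k + 1) := by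
          rw [Finset.card_sigma, Nat.range_succ_eq_Iic, ← Fin.map_valEmbedding_Iic,
            Finset.sum_map]
          simp
  linarith [sum_range_two_pow_succ_add_two (m.1 + 1)]

lemma card_le_two_mul_card_of_forall_lt {p : ℕ} (S : Finset (GapVoter p)) (T : Finset (GapCand p))
    (hS : S.Nonempty) (hT : ∀ i ∈ S, (gapW p ∩ gapA p i).card < (T ∩ gapA p i).card) :
    S.card ≤ 2 * T.card := by
  obtain ⟨i, hiS, hmax⟩ := S.exists_max_image (·.1) hS
  have hTi : 2 ^ (i.1.1 + 1) ≤ T.card := by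
    have hlt := hT i hiS
    rw [card_gapW_inter_gapA] at hlt
    have hsub := Finset.card_le_card (Finset.inter_subset_left (s₁ := T) (s₂ := gapA p i))
    have hpos := @Nat.one_le_two_pow (i.1.1 + 1)
    omega
  have hSi := card_add_two_le_of_forall_fst_le S i.1 hmax
  rw [pow_succ' 2 (i.1.1 + 1)] at hSi
  omega

/-- In the integrality-gap instance, the fractional solution `x_j = 2^{-p}` on `C'`,
`z_i = 2^{-ℓ}` for `i ∈ V_ℓ`, `y_{ij} = min(x_j, z_i)` is feasible for the LP relaxation
and has objective value (with `R = 1`) at most `1/p`; hence `θ_p ≤ 1/p` while `θ_c ≥ 1/2`,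
an `Ω(log m)` integrality gap. -/
theorem integrality_gap_lp_value (p : ℕ) (hp : 1 ≤ p) :
    (∀ i : GapVoter p,
        gapz p i * (((gapW p ∩ gapA p i).card : ℝ) + 1)
          ≤ ∑ j ∈ gapA p i, min (gapx p j) (gapz p i)) ∧
    (∀ (i : GapVoter p) (j : GapCand p), min (gapx p j) (gapz p i) ≤ gapx p j) ∧
    (∀ (i : GapVoter p) (j : GapCand p), min (gapx p j) (gapz p i) ≤ gapz p i) ∧
    (∀ j : GapCand p, 0 ≤ gapx p j) ∧
    (∀ i : GapVoter p, 0 ≤ gapz p i) ∧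
    (1 : ℝ) ≤ ∑ i : GapVoter p, gapz p i ∧
    1 * (∑ j : GapCand p, gapx p j) / (∑ i : GapVoter p, gapz p i) ≤ 1 / (p : ℝ) ∧
    (∀ (S : Finset (GapVoter p)) (T : Finset (GapCand p)), S.Nonempty →
      (∀ i ∈ S, (gapW p ∩ gapA p i).card < (T ∩ gapA p i).card) →
      (1 / 2 : ℝ) ≤ 1 * (T.card : ℝ) / (S.card : ℝ)) := by
  refine ⟨fun i => ((gapz_mul_card_gapW_inter_gapA_add_one i).trans
      (sum_min_gapx_gapz i).symm).le, fun _ _ => min_le_left _ _, fun _ _ => min_le_right _ _,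
    gapx_nonneg, gapz_nonneg, ?_, ?_, ?_⟩
  · rw [sum_gapz]
    exact_mod_cast hp
  · rw [sum_gapx, sum_gapz, one_mul]
  · intro S T hS hT
    have hST : (S.card : ℝ) ≤ 2 * T.card := by
      exact_mod_cast card_le_two_mul_card_of_forall_lt S T hS hT
    rw [one_mul, le_div_iff₀ (by exact_mod_cast hS.card_pos)]
    linarith
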